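/- Let U, V be k-dimensional subspaces of F_q^n with U = rowspace(A) and V = rowspace(B), where A, B are k × n matrices over F_q in inverse reduced row echelon form. If the inverse identifying vectors satisfy v̂(A) = v̂(B), then d_S(U, V) = 2·d_R(C_A, C_B), where C_A and C_B denote the k × (n − k) submatrices of A and B obtained by deleting the pivot columns, and d_R denotes rank distance. -/

import Mathlib

open Module

/-- The subspace distance `d_S(U,V) = dim U + dim V - 2 dim (U ⊓ V)`. -/
noncomputable def subDist {F : Type*} [Field F] {n : ℕ}
    (U V : Submodule F (Fin n → F)) : ℕ :=
  finrank F U + finrank F V - 2 * finrank F (U ⊓ V : Submodule F (Fin n → F))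

/-- The rank distance `d_R(A,B) = rank (A - B)`. -/
noncomputable def rankDist {F : Type*} [Field F] {m n : ℕ}
    (A B : Matrix (Fin m) (Fin n) F) : ℕ :=
  (A - B).rank

/-- `A` is a `k × n` matrix in inverse reduced row echelon form with pivot (leading one)
of row `i` in column `p i`: the pivots move strictly to the left, each pivot entry
is `1` and is the first nonzero entry of its row, and each pivot is the only
nonzero entry in its column. -/
def IsInvRREF {F : Type*} [Field F] {k n : ℕ}
    (A : Matrix (Fin k) (Fin n) F) (p : Fin k → Fin n) : Prop :=
  StrictAnti p ∧ (∀ i, A i (p i) = 1) ∧ (∀ i j, j < p i → A i j = 0) ∧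
    (∀ i i', i' ≠ i → A i' (p i) = 0)

/-- The identifying vector of a matrix in inverse RREF with pivot columns `p`,
as a Boolean vector of length `n` whose `1`s are exactly at the pivot positions. -/
def identifyingVector {k n : ℕ} (p : Fin k → Fin n) : Fin n → Bool :=
  fun j => decide (∃ i, p i = j)

/-!
With equal pivot columns, the rows of `A - B` vanish on every pivot column. A vector in the row
space of `A` is determined by its pivot entries (they are its coordinates in the rows of `A`), so
the row spaces of `A` and of `A - B` meet trivially. Since `U + V = U + rowspace (A - B)`, this
gives `dim (U + V) = k + rank (A - B)`, whence `d_S(U, V) = 2 dim (U + V) - 2k = 2 rank (A - B)`.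
Deleting the pivot columns, which are zero in `A - B`, does not change its rank.
-/
open Matrix Submodule

theorem subDist_add_finrank_add_finrank {F : Type*} [Field F] {n : ℕ}
    (U V : Submodule F (Fin n → F)) :
    subDist U V + finrank F U + finrank F V = 2 * finrank F ↥(U ⊔ V) := by
  have hsup : finrank F ↥(U ⊔ V) + finrank F ↥(U ⊓ V) = finrank F U + finrank F V :=
    finrank_sup_add_finrank_inf_eq U V
  have hinfU : finrank F ↥(U ⊓ V) ≤ finrank F U := finrank_mono inf_le_left
  have hinfV : finrank F ↥(U ⊓ V) ≤ finrank F V := finrank_mono inf_le_right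
  unfold subDist
  omega

theorem Submodule.span_range_sup_span_range_eq_sup_sub {R M ι : Type*} [Ring R]
    [AddCommGroup M] [Module R M] (a b : ι → M) :
    span R (Set.range a) ⊔ span R (Set.range b) =
      span R (Set.range a) ⊔ span R (Set.range (a - b)) := by
  have ha (i : ι) : a i ∈ span R (Set.range a) := subset_span ⟨i, rfl⟩
  refine le_antisymm (sup_le le_sup_left ?_) (sup_le le_sup_left ?_) <;>
    rw [span_le] <;> rintro _ ⟨i, rfl⟩
  · rw [SetLike.mem_coe, ← sub_sub_cancel (a i) (b i)]
    exact sub_mem (mem_sup_left (ha i)) (mem_sup_right (subset_span ⟨i, rfl⟩))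
  · exact sub_mem (mem_sup_left (ha i)) (mem_sup_right (subset_span ⟨i, rfl⟩))

theorem Matrix.rank_submatrix_id_of_apply_eq_zero {R : Type*} [Field R] {m n n' : Type*}
    [Fintype n] [Fintype n'] (D : Matrix m n R) (c : n' → n)
    (hD : ∀ j ∉ Set.range c, ∀ i, D i j = 0) : (D.submatrix id c).rank = D.rank := by
  refine (rank_submatrix_le D id c).antisymm ?_
  rw [rank_eq_finrank_span_cols, rank_eq_finrank_span_cols]
  have := Module.Finite.span_of_finite R (Set.finite_range (D.submatrix id c).col)
  refine finrank_mono (span_le.2 ?_)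
  rintro _ ⟨j, rfl⟩
  by_cases hj : j ∈ Set.range c
  · obtain ⟨j', rfl⟩ := hj
    exact subset_span ⟨j', rfl⟩
  · have : D.col j = 0 := funext fun i => hD j hj i
    simp [this]

theorem eq_of_identifyingVector_eq {k n : ℕ} {p q : Fin k → Fin n} (hp : StrictAnti p)
    (hq : StrictAnti q) (h : identifyingVector p = identifyingVector q) : p = q := by
  refine (hp.range_inj hq).1 (Set.ext fun j => ?_)
  simpa [identifyingVector] using congrFun h j

namespace IsInvRREF

variable {F : Type*} [Field F] {k n : ℕ} {A B : Matrix (Fin k) (Fin n) F} {p : Fin k → Fin n}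

theorem sum_smul_apply_pivot (hA : IsInvRREF A p) (g : Fin k → F) (i : Fin k) :
    (∑ j, g j • A j) (p i) = g i := by
  rw [Finset.sum_apply, Finset.sum_eq_single i]
  · simp [hA.2.1 i]
  · intro j _ hj
    simp [hA.2.2.2 i j hj]
  · simp

theorem linearIndependent_rows (hA : IsInvRREF A p) : LinearIndependent F fun i => A i := by
  rw [Fintype.linearIndependent_iff]
  intro g hg i
  rw [← hA.sum_smul_apply_pivot g i, hg, Pi.zero_apply]

theorem finrank_span_rows (hA : IsInvRREF A p) :
    finrank F (span F (Set.range fun i => A i)) = k := by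
  rw [finrank_span_eq_card hA.linearIndependent_rows, Fintype.card_fin]

theorem eq_zero_of_mem_span_rows (hA : IsInvRREF A p) {x : Fin n → F}
    (hx : x ∈ span F (Set.range fun i => A i)) (hp : ∀ i, x (p i) = 0) : x = 0 := by
  obtain ⟨g, rfl⟩ := (mem_span_range_iff_exists_fun F).1 hx
  have hg : g = 0 := funext fun i => (hA.sum_smul_apply_pivot g i).symm.trans (hp i)
  simp [hg]

theorem disjoint_span_rows (hA : IsInvRREF A p) {m : Type*} [Fintype m]
    {D : Matrix m (Fin n) F} (hD : ∀ i j, D i (p j) = 0) :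
    Disjoint (span F (Set.range fun i => A i)) (span F (Set.range fun i => D i)) := by
  rw [disjoint_iff_inf_le]
  rintro x ⟨hxA, hxD⟩
  obtain ⟨g, rfl⟩ := (mem_span_range_iff_exists_fun F).1 hxD
  refine hA.eq_zero_of_mem_span_rows hxA fun j => ?_
  simp [Finset.sum_apply, hD]

theorem sub_apply_pivot (hA : IsInvRREF A p) (hB : IsInvRREF B p) (i j : Fin k) :
    (A - B) i (p j) = 0 := by
  rcases eq_or_ne i j with rfl | hij
  · simp [hA.2.1 i, hB.2.1 i]
  · simp [hA.2.2.2 j i hij, hB.2.2.2 j i hij]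

theorem finrank_span_rows_sup (hA : IsInvRREF A p) (hB : IsInvRREF B p) :
    finrank F ↥(span F (Set.range fun i => A i) ⊔ span F (Set.range fun i => B i)) =
      k + (A - B).rank := by
  have hsup := finrank_sup_add_finrank_inf_eq (span F (Set.range fun i => A i))
    (span F (Set.range fun i => (A - B) i))
  rw [(hA.disjoint_span_rows (hA.sub_apply_pivot hB)).eq_bot, finrank_bot, add_zero,
    hA.finrank_span_rows] at hsup
  rw [span_range_sup_span_range_eq_sup_sub, rank_eq_finrank_span_row]
  exact hsup

end IsInvRREF

theorem stmt_7_general {F : Type*} [Field F] {k n : ℕ}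
    (A B : Matrix (Fin k) (Fin n) F) (pA pB : Fin k → Fin n)
    (hA : IsInvRREF A pA) (hB : IsInvRREF B pB)
    (hv : identifyingVector pA = identifyingVector pB)
    (U V : Submodule F (Fin n → F))
    (hU : U = Submodule.span F (Set.range fun i => A i))
    (hV : V = Submodule.span F (Set.range fun i => B i))
    -- `c` enumerates, in increasing order, the `n - k` non-pivot columns
    (c : Fin (n - k) → Fin n)
    (hcp : ∀ j, (∃ i, c i = j) ↔ ¬∃ i, pA i = j) :
    subDist U V = 2 * rankDist (A.submatrix id c) (B.submatrix id c) := by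
  obtain rfl : pB = pA := eq_of_identifyingVector_eq hB.1 hA.1 hv.symm
  have hrank : rankDist (A.submatrix id c) (B.submatrix id c) = (A - B).rank := by
    change ((A - B).submatrix id c).rank = _
    refine rank_submatrix_id_of_apply_eq_zero _ c fun j hj i => ?_
    obtain ⟨i', rfl⟩ : ∃ i', pB i' = j := by simpa [hcp] using hj
    exact hA.sub_apply_pivot hB i i'
  have hdist := subDist_add_finrank_add_finrank U V
  subst hU hV
  rw [hA.finrank_span_rows, hB.finrank_span_rows, hA.finrank_span_rows_sup hB] at hdist
  omega

theorem stmt_7 {F : Type*} [Field F] [Fintype F] {k n : ℕ}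
    (A B : Matrix (Fin k) (Fin n) F) (pA pB : Fin k → Fin n)
    (hA : IsInvRREF A pA) (hB : IsInvRREF B pB)
    (hv : identifyingVector pA = identifyingVector pB)
    (U V : Submodule F (Fin n → F))
    (hU : U = Submodule.span F (Set.range fun i => A i))
    (hV : V = Submodule.span F (Set.range fun i => B i))
    -- `c` enumerates, in increasing order, the `n - k` non-pivot columns
    (c : Fin (n - k) → Fin n) (hc : StrictMono c)
    (hcp : ∀ j, (∃ i, c i = j) ↔ ¬∃ i, pA i = j) :
    subDist U V = 2 * rankDist (A.submatrix id c) (B.submatrix id c) :=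
  stmt_7_general A B pA pB hA hB hv U V hU hV c hcp
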